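/- arXiv:2203.00052 — 2 statements merged into one kernel-verified Lean document; each statement's English description precedes it below -/
import Mathlib

section
/- For η ∈ (1/√2, 1) and N_S ≥ 0, the condition f₁(η, N_S) ≥ 0 (with f₁ as above) holds if and only if N_S ≤ N̄_S(η), where N̄_S(η) is the unique zero of f₁(η, ·); for η ≤ 1/√2, f₁(η, N_S) < 0 for all N_S > 0. -/
noncomputable def f₁ (η NS : ℝ) : ℝ :=
  ((1-η^2)^2 + η^4) / ((1-η^2) * (1 + 2*NS*η^2*(1-η^2))^2)
    - 1 / (1 - 2*η^2*(Real.sqrt (NS*(1+NS)) - NS))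

/-!
The map `N ↦ √(N(1+N)) - N` increases from `0` towards `1/2` on `[0, ∞)`, so for fixed
`0 < η < 1` the subtracted term of `f₁ η` strictly increases while the first term strictly
decreases: `f₁ η` is strictly decreasing and continuous on `[0, ∞)`. Its value at `0` is
`η²(2η² - 1)/(1 - η²)`, whose sign is that of `η - 1/√2`, and it is negative for large `N`.
The intermediate value theorem and strict monotonicity give the threshold `N̄_S(η)`.
-/

open Set

theorem StrictAntiOn.exists_unique_zero_Ici {f : ℝ → ℝ} {a b : ℝ} (hf : StrictAntiOn f (Ici a))
    (hc : ContinuousOn f (Ici a)) (hab : a ≤ b) (ha : 0 < f a) (hb : f b < 0) :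
    ∃ x, a < x ∧ f x = 0 ∧ (∀ y, a < y ∧ f y = 0 → y = x) ∧
      ∀ y, a ≤ y → (0 ≤ f y ↔ y ≤ x) := by
  obtain ⟨x, ⟨hax, -⟩, hx⟩ := intermediate_value_Ioo' hab (hc.mono Icc_subset_Ici_self) ⟨hb, ha⟩
  have hxa : x ∈ Ici a := hax.le
  refine ⟨x, hax, hx, fun y ⟨hay, hy⟩ => hf.injOn (mem_Ici.2 hay.le) hxa (hy.trans hx.symm),
    fun y hay => ?_⟩
  rw [← hx]
  exact hf.le_iff_ge hxa hay

theorem one_div_sqrt_two_lt_iff {η : ℝ} (hη : 0 < η) : 1 / √2 < η ↔ 1 / 2 < η ^ 2 := by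
  rw [one_div, ← Real.sqrt_inv, Real.sqrt_lt' hη, one_div]

section SqueezingGap

variable {N : ℝ}

theorem self_le_sqrt_mul_one_add (hN : 0 ≤ N) : N ≤ √(N * (1 + N)) :=
  (Real.le_sqrt hN (by positivity)).2 (by nlinarith)

theorem sqrt_mul_one_add_lt_add_half (hN : 0 ≤ N) : √(N * (1 + N)) < N + 1 / 2 :=
  (Real.sqrt_lt' (by linarith)).2 (by nlinarith)

theorem strictMonoOn_sqrt_mul_one_add_sub_self :
    StrictMonoOn (fun N : ℝ => √(N * (1 + N)) - N) (Ici 0) := by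
  intro a (ha : 0 ≤ a) b (hb : 0 ≤ b) hab
  have hsa := sqrt_mul_one_add_lt_add_half ha
  have hsq : √(a * (1 + a)) ^ 2 = a * (1 + a) := Real.sq_sqrt (by positivity)
  -- squaring reduces this to `(b - a)(2√(a(1+a)) - 2a - 1) < 0`
  have key : √(a * (1 + a)) + (b - a) < √(b * (1 + b)) := by
    rw [Real.lt_sqrt (by positivity)]
    nlinarith [mul_lt_mul_of_pos_right hsa (sub_pos.2 hab)]
  simp only
  linarith

end SqueezingGap

section Threshold

variable {η : ℝ}

theorem one_sub_two_mul_sqrt_gap_mem_Ioc (hη0 : 0 < η ^ 2) {N : ℝ} (hN : 0 ≤ N) :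
    1 - 2 * η ^ 2 * (√(N * (1 + N)) - N) ∈ Ioc (1 - η ^ 2) 1 := by
  have h1 := sqrt_mul_one_add_lt_add_half hN
  have h2 := self_le_sqrt_mul_one_add hN
  constructor
  · nlinarith [mul_pos hη0 (show 0 < 1 / 2 - (√(N * (1 + N)) - N) by linarith)]
  · nlinarith [mul_nonneg hη0.le (show 0 ≤ √(N * (1 + N)) - N by linarith)]

theorem one_add_two_mul_mul_one_sub_pos (hη1 : η ^ 2 ≤ 1) {N : ℝ} (hN : 0 ≤ N) :
    0 < 1 + 2 * N * η ^ 2 * (1 - η ^ 2) := by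
  have : 0 ≤ N * η ^ 2 * (1 - η ^ 2) := by have := sub_nonneg.2 hη1; positivity
  linarith

theorem f₁_strictAntiOn (hη0 : 0 < η ^ 2) (hη1 : η ^ 2 < 1) : StrictAntiOn (f₁ η) (Ici 0) := by
  intro a (ha : 0 ≤ a) b (hb : 0 ≤ b) hab
  have hu : 0 < 1 - η ^ 2 := sub_pos.2 hη1
  have hlin : 1 + 2 * a * η ^ 2 * (1 - η ^ 2) < 1 + 2 * b * η ^ 2 * (1 - η ^ 2) := by
    nlinarith [mul_lt_mul_of_pos_right hab (mul_pos hη0 hu)]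
  have hfirst : ((1 - η ^ 2) ^ 2 + η ^ 4) / ((1 - η ^ 2) * (1 + 2 * b * η ^ 2 * (1 - η ^ 2)) ^ 2)
      < ((1 - η ^ 2) ^ 2 + η ^ 4) / ((1 - η ^ 2) * (1 + 2 * a * η ^ 2 * (1 - η ^ 2)) ^ 2) := by
    have hpos := one_add_two_mul_mul_one_sub_pos hη1.le ha
    refine div_lt_div_of_pos_left (by positivity) (by positivity) ?_
    exact mul_lt_mul_of_pos_left (pow_lt_pow_left₀ hlin hpos.le two_ne_zero) hu
  have hsecond : 1 / (1 - 2 * η ^ 2 * (√(a * (1 + a)) - a))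
      < 1 / (1 - 2 * η ^ 2 * (√(b * (1 + b)) - b)) := by
    have hgap := strictMonoOn_sqrt_mul_one_add_sub_self (mem_Ici.2 ha) (mem_Ici.2 hb) hab
    refine one_div_lt_one_div_of_lt ?_ (by simp only at hgap; nlinarith)
    linarith [(one_sub_two_mul_sqrt_gap_mem_Ioc hη0 hb).1]
  unfold f₁
  linarith

theorem f₁_continuousOn (hη0 : 0 < η ^ 2) (hη1 : η ^ 2 < 1) : ContinuousOn (f₁ η) (Ici 0) := by
  refine .sub (continuousOn_const.div (by fun_prop) fun N hN => ?_)
    (continuousOn_const.div (by fun_prop) fun N hN => ?_)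
  · have := one_add_two_mul_mul_one_sub_pos hη1.le hN
    have := sub_pos.2 hη1
    positivity
  · linarith [(one_sub_two_mul_sqrt_gap_mem_Ioc hη0 hN).1]

theorem f₁_neg_of_large (hη0 : 0 < η ^ 2) (hη1 : η ^ 2 < 1) :
    f₁ η (1 / (η ^ 2 * (1 - η ^ 2) ^ 2)) < 0 := by
  set N := 1 / (η ^ 2 * (1 - η ^ 2) ^ 2)
  have hu : 0 < 1 - η ^ 2 := sub_pos.2 hη1
  have hN : 0 < N := by positivity
  have hη : η ≠ 0 := by rintro rfl; simp at hη0
  have hden : (1 - η ^ 2) * (1 + 2 * N * η ^ 2 * (1 - η ^ 2)) ^ 2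
      = (1 - η ^ 2) + 4 + 4 / (1 - η ^ 2) := by
    simp only [N]
    field_simp
    ring
  have hfirst : ((1 - η ^ 2) ^ 2 + η ^ 4) / ((1 - η ^ 2) * (1 + 2 * N * η ^ 2 * (1 - η ^ 2)) ^ 2)
      < 1 := by
    rw [hden, div_lt_one (by positivity)]
    nlinarith [div_pos four_pos hu]
  have hsecond : 1 ≤ 1 / (1 - 2 * η ^ 2 * (√(N * (1 + N)) - N)) := by
    obtain ⟨hlo, hhi⟩ := one_sub_two_mul_sqrt_gap_mem_Ioc hη0 hN.le
    rw [le_div_iff₀ (by linarith)]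
    linarith
  unfold f₁
  linarith

theorem f₁_apply_zero (hη : η ^ 2 ≠ 1) : f₁ η 0 = η ^ 2 * (2 * η ^ 2 - 1) / (1 - η ^ 2) := by
  have := sub_ne_zero.2 hη.symm
  unfold f₁
  field_simp
  norm_num
  ring

end Threshold

theorem squeezed_vacuum_optimal_region (η : ℝ) (hη0 : 0 < η) (hη1 : η < 1) :
    (1/Real.sqrt 2 < η →
      ∃ Nbar : ℝ, 0 < Nbar ∧ f₁ η Nbar = 0 ∧
        (∀ N : ℝ, 0 < N ∧ f₁ η N = 0 → N = Nbar) ∧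
        ∀ NS : ℝ, 0 ≤ NS → (0 ≤ f₁ η NS ↔ NS ≤ Nbar)) ∧
    (η ≤ 1/Real.sqrt 2 → ∀ NS : ℝ, 0 < NS → f₁ η NS < 0) := by
  have ht0 : 0 < η ^ 2 := by positivity
  have ht1 : η ^ 2 < 1 := pow_lt_one₀ hη0.le hη1 two_ne_zero
  have hu : 0 < 1 - η ^ 2 := sub_pos.2 ht1
  refine ⟨fun hη => ?_, fun hη NS hNS => ?_⟩
  · have hhalf := (one_div_sqrt_two_lt_iff hη0).1 hη
    have hf0 : 0 < f₁ η 0 := by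
      rw [f₁_apply_zero ht1.ne]
      exact div_pos (mul_pos ht0 (by linarith)) hu
    exact (f₁_strictAntiOn ht0 ht1).exists_unique_zero_Ici (f₁_continuousOn ht0 ht1)
      (by positivity) hf0 (f₁_neg_of_large ht0 ht1)
  · have hhalf : η ^ 2 ≤ 1 / 2 := not_lt.1 ((one_div_sqrt_two_lt_iff hη0).not.1 (not_lt.2 hη))
    have hf0 : f₁ η 0 ≤ 0 := by
      rw [f₁_apply_zero ht1.ne]
      exact div_nonpos_of_nonpos_of_nonneg (mul_nonpos_of_nonneg_of_nonpos ht0.le (by linarith)) hu.le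
    exact ((f₁_strictAntiOn ht0 ht1) (mem_Ici.2 le_rfl) hNS.le hNS).trans_le hf0
end

section
/- Let a ≥ 1/2, b ≥ 1/2 with a ≠ b, and suppose c₊² = (1/(8ab))[a²(a²+3b²-1) + b²(b²+3a²-1) ± (a²-b²)√(((a+b)²-1)((a-b)²-1))] is real, which requires (a+b)² ≥ 1 and (a-b)² ≥ 1 (i.e. |a-b| ≥ 1). Then ab < c₊², so the corresponding covariance matrix is not positive semidefinite; hence no pure physical two-mode Gaussian state in the canonical form exists with a ≠ b. -/
/-!
Writing `D = a² + b²` and `T = (a² - b²)²`, the numerator of `c₊²` equals `8a²b² + (T - D) ± (a² - b²)√(…)`,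
so `c₊² > ab` amounts to `|(a² - b²)√(…)| < T - D`. Both sides are positive, and since the radicand is
`T - 2D + 1`, squaring turns this into `T(T - 2D + 1) < (T - D)²`, i.e. `T < D²`, which holds because
`D² - T = 4a²b² > 0`.
-/

lemma sq_add_sq_lt_sq_sub_sq_sq {a b : ℝ} (hab : 0 < a * b) (hdiff : 1 ≤ (a - b) ^ 2) :
    a ^ 2 + b ^ 2 < (a ^ 2 - b ^ 2) ^ 2 :=
  calc a ^ 2 + b ^ 2 < (a + b) ^ 2 := by nlinarith
    _ ≤ (a - b) ^ 2 * (a + b) ^ 2 := le_mul_of_one_le_left (sq_nonneg _) hdiff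
    _ = (a ^ 2 - b ^ 2) ^ 2 := by ring

lemma abs_sq_sub_sq_mul_sqrt_lt {a b : ℝ} (hab : 0 < a * b) (hdiff : 1 ≤ (a - b) ^ 2) :
    |(a ^ 2 - b ^ 2) * √(((a + b) ^ 2 - 1) * ((a - b) ^ 2 - 1))|
      < (a ^ 2 - b ^ 2) ^ 2 - (a ^ 2 + b ^ 2) := by
  have hradicand : √(((a + b) ^ 2 - 1) * ((a - b) ^ 2 - 1)) ^ 2
      = (a ^ 2 - b ^ 2) ^ 2 - 2 * (a ^ 2 + b ^ 2) + 1 := by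
    -- `(a + b)² = (a - b)² + 4ab ≥ 1`
    rw [Real.sq_sqrt (mul_nonneg (by linarith) (by linarith))]
    ring
  have hgap := sq_add_sq_lt_sq_sub_sq_sq hab hdiff
  refine abs_lt_of_sq_lt_sq ?_ (by linarith)
  rw [mul_pow, hradicand]
  nlinarith [mul_pos hab hab]

theorem no_pure_state_with_a_ne_b_general (a b cp ε : ℝ)
    (ha : 1/2 ≤ a) (hb : 1/2 ≤ b)
    (hε : ε = 1 ∨ ε = -1)
    (hdiff : 1 ≤ (a-b)^2)
    (hcp : cp^2 = (1/(8*a*b)) *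
      (a^2*(a^2 + 3*b^2 - 1) + b^2*(b^2 + 3*a^2 - 1)
        + ε*(a^2 - b^2)*Real.sqrt (((a+b)^2 - 1)*((a-b)^2 - 1)))) :
    a*b < cp^2 := by
  have hab : 0 < a * b := mul_pos (by linarith) (by linarith)
  set S := √(((a + b) ^ 2 - 1) * ((a - b) ^ 2 - 1))
  have hbound := abs_sq_sub_sq_mul_sqrt_lt hab hdiff
  have hsign : -|(a ^ 2 - b ^ 2) * S| ≤ ε * (a ^ 2 - b ^ 2) * S := by
    have hε_abs : |ε| = 1 := by rcases hε with rfl | rfl <;> norm_num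
    have h := neg_abs_le (ε * ((a ^ 2 - b ^ 2) * S))
    rwa [abs_mul, hε_abs, one_mul, ← mul_assoc] at h
  have hnum : a^2*(a^2 + 3*b^2 - 1) + b^2*(b^2 + 3*a^2 - 1)
      = 8 * (a * b) ^ 2 + ((a ^ 2 - b ^ 2) ^ 2 - (a ^ 2 + b ^ 2)) := by ring
  rw [hcp, hnum]
  calc a * b = 1 / (8 * a * b) * (8 * (a * b) ^ 2) := by field_simp
    _ < _ := by gcongr; linarith

theorem no_pure_state_with_a_ne_b (a b cp ε : ℝ)
    (ha : 1/2 ≤ a) (hb : 1/2 ≤ b) (hab : a ≠ b)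
    (hε : ε = 1 ∨ ε = -1)
    (hsum : 1 ≤ (a+b)^2) (hdiff : 1 ≤ (a-b)^2)
    (hcp : cp^2 = (1/(8*a*b)) *
      (a^2*(a^2 + 3*b^2 - 1) + b^2*(b^2 + 3*a^2 - 1)
        + ε*(a^2 - b^2)*Real.sqrt (((a+b)^2 - 1)*((a-b)^2 - 1)))) :
    a*b < cp^2 :=
  no_pure_state_with_a_ne_b_general a b cp ε ha hb hε hdiff hcp
end
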